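/- Let s,t > 0, let Θ ∈ L¹(0,∞) with θ = ∫_0^∞ Θ, and suppose t > θs^p and s < θt^q. Let (u,v) be the local positive solution of the Lane-Emden Cauchy problem with u(0)=s, v(0)=2t, and define R_I = sup{r : (u(τ),v(τ)) ∈ (0,s)×(t,2t) for all τ ∈ (0,r)}. Then R_I < ∞ and u(R_I) = 0 (with v(R_I) ≥ t); in particular the initial datum (s,2t) belongs to the set A of data whose solution's u-component vanishes first. -/

import Mathlib

/-!
As long as `u > 0` and `v ≥ t`, the integral equations give `u r ≤ s - t ^ q ∫₀ʳ Θ`, and, since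
then also `0 < u ≤ s`, `t < 2t - θ s ^ p ≤ v r < 2t`. Because `s < θ t ^ q`, the first bound makes
`u` vanish in finite time, while the second keeps `v` strictly above `t` up to that moment. So the
first time `R` at which `u ≤ 0` or `v ≤ t` is finite and positive. By continuity `u R ≥ 0` and
`v R ≥ t`, and if `u R > 0` the second bound would give `v R > t`; hence `u R = 0`.
-/

open Filter MeasureTheory Set

theorem ContinuousAt.ge_of_forall_Ioo {f : ℝ → ℝ} {a b c : ℝ} (hf : ContinuousAt f b)
    (hab : a < b) (h : ∀ x ∈ Ioo a b, c ≤ f x) : c ≤ f b :=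
  ge_of_tendsto (hf.tendsto.mono_left nhdsWithin_le_nhds)
    (eventually_of_mem (Ioo_mem_nhdsLT hab) h)

noncomputable section

def volumeRatio (ρ : ℝ → ℝ) (r : ℝ) : ℝ :=
  (∫ σ in (0:ℝ)..r, ρ σ) / ρ r

def weightedVolumeRatio (ρ w : ℝ → ℝ) (r : ℝ) : ℝ :=
  (∫ τ in (0:ℝ)..r, w τ * ρ τ) / ρ r

def radialPotential (ρ w : ℝ → ℝ) (r : ℝ) : ℝ :=
  ∫ σ in (0:ℝ)..r, weightedVolumeRatio ρ w σ

end

section RadialPotential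

variable {ρ w w₁ w₂ : ℝ → ℝ} {r R : ℝ}

theorem weightedVolumeRatio_const (ρ : ℝ → ℝ) (c r : ℝ) :
    weightedVolumeRatio ρ (fun _ => c) r = c * volumeRatio ρ r := by
  rw [weightedVolumeRatio, volumeRatio, intervalIntegral.integral_const_mul, mul_div_assoc]

theorem radialPotential_const (ρ : ℝ → ℝ) (c R : ℝ) :
    radialPotential ρ (fun _ => c) R = c * ∫ σ in (0:ℝ)..R, volumeRatio ρ σ := by
  simp only [radialPotential, weightedVolumeRatio_const, intervalIntegral.integral_const_mul]

theorem intervalIntegrable_mul_of_continuousOn (hρ_cont : ContinuousOn ρ (Ici 0))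
    (hw : ContinuousOn w (Icc 0 r)) (hr : 0 ≤ r) :
    IntervalIntegrable (fun τ => w τ * ρ τ) volume 0 r :=
  (hw.mul (hρ_cont.mono Icc_subset_Ici_self)).intervalIntegrable_of_Icc hr

theorem volumeRatio_pos (hρ_pos : ∀ r > 0, 0 < ρ r) (hρ_cont : ContinuousOn ρ (Ici 0))
    (hr : 0 < r) : 0 < volumeRatio ρ r :=
  div_pos (intervalIntegral.intervalIntegral_pos_of_pos_on
    ((hρ_cont.mono Icc_subset_Ici_self).intervalIntegrable_of_Icc hr.le)
    (fun τ hτ => hρ_pos τ hτ.1) hr) (hρ_pos r hr)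

theorem weightedVolumeRatio_mono (hρ_pos : ∀ r > 0, 0 < ρ r)
    (hρ_cont : ContinuousOn ρ (Ici 0)) (hw₁ : ContinuousOn w₁ (Icc 0 r))
    (hw₂ : ContinuousOn w₂ (Icc 0 r)) (hr : 0 ≤ r) (h : ∀ τ ∈ Ioo 0 r, w₁ τ ≤ w₂ τ) :
    weightedVolumeRatio ρ w₁ r ≤ weightedVolumeRatio ρ w₂ r := by
  rcases hr.eq_or_lt with rfl | hr
  · simp [weightedVolumeRatio]
  refine div_le_div_of_nonneg_right ?_ (hρ_pos r hr).le
  exact intervalIntegral.integral_mono_on_of_le_Ioo hr.le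
    (intervalIntegrable_mul_of_continuousOn hρ_cont hw₁ hr.le)
    (intervalIntegrable_mul_of_continuousOn hρ_cont hw₂ hr.le)
    (fun τ hτ => mul_le_mul_of_nonneg_right (h τ hτ) (hρ_pos τ hτ.1).le)

theorem intervalIntegrable_weightedVolumeRatio (hρ_pos : ∀ r > 0, 0 < ρ r)
    (hρ_cont : ContinuousOn ρ (Ici 0)) (hΘ : IntegrableOn (volumeRatio ρ) (Ioc 0 R))
    (hw : ContinuousOn w (Icc 0 R)) (hR : 0 ≤ R) :
    IntervalIntegrable (weightedVolumeRatio ρ w) volume 0 R := by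
  obtain ⟨M, hM⟩ := isCompact_Icc.exists_bound_of_continuousOn hw
  have hbound : ∀ σ ∈ Ioc 0 R, ‖weightedVolumeRatio ρ w σ‖ ≤ M * volumeRatio ρ σ := by
    intro σ hσ
    have hwσ := hw.mono (Icc_subset_Icc_right hσ.2)
    have hw_mem : ∀ τ ∈ Ioo 0 σ, -M ≤ w τ ∧ w τ ≤ M := fun τ hτ =>
      abs_le.1 (hM τ ⟨hτ.1.le, hτ.2.le.trans hσ.2⟩)
    rw [Real.norm_eq_abs, abs_le, ← neg_mul, ← weightedVolumeRatio_const,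
      ← weightedVolumeRatio_const]
    exact ⟨weightedVolumeRatio_mono hρ_pos hρ_cont continuousOn_const hwσ hσ.1.le
        fun τ hτ => (hw_mem τ hτ).1,
      weightedVolumeRatio_mono hρ_pos hρ_cont hwσ continuousOn_const hσ.1.le
        fun τ hτ => (hw_mem τ hτ).2⟩
  have hcont : ContinuousOn (weightedVolumeRatio ρ w) (Ioc 0 R) := by
    have hprim := intervalIntegral.continuousOn_primitive_interval'
      (intervalIntegrable_mul_of_continuousOn hρ_cont hw hR) left_mem_uIcc
    rw [uIcc_of_le hR] at hprim
    exact (hprim.mono Ioc_subset_Icc_self).div (hρ_cont.mono fun σ hσ => hσ.1.le)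
      fun σ hσ => (hρ_pos σ hσ.1).ne'
  rw [intervalIntegrable_iff_integrableOn_Ioc_of_le hR]
  exact (hΘ.const_mul M).mono' (hcont.aestronglyMeasurable measurableSet_Ioc)
    ((ae_restrict_iff' measurableSet_Ioc).2 (ae_of_all _ hbound))

theorem radialPotential_mono (hρ_pos : ∀ r > 0, 0 < ρ r) (hρ_cont : ContinuousOn ρ (Ici 0))
    (hΘ : IntegrableOn (volumeRatio ρ) (Ioc 0 R)) (hw₁ : ContinuousOn w₁ (Icc 0 R))
    (hw₂ : ContinuousOn w₂ (Icc 0 R)) (hR : 0 ≤ R) (h : ∀ τ ∈ Ioo 0 R, w₁ τ ≤ w₂ τ) :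
    radialPotential ρ w₁ R ≤ radialPotential ρ w₂ R :=
  intervalIntegral.integral_mono_on_of_le_Ioo hR
    (intervalIntegrable_weightedVolumeRatio hρ_pos hρ_cont hΘ hw₁ hR)
    (intervalIntegrable_weightedVolumeRatio hρ_pos hρ_cont hΘ hw₂ hR)
    fun _ hσ => weightedVolumeRatio_mono hρ_pos hρ_cont (hw₁.mono (Icc_subset_Icc_right hσ.2.le))
      (hw₂.mono (Icc_subset_Icc_right hσ.2.le)) hσ.1.le
      fun τ hτ => h τ ⟨hτ.1, hτ.2.trans hσ.2⟩

theorem radialPotential_nonneg (hρ_pos : ∀ r > 0, 0 < ρ r) (hρ_cont : ContinuousOn ρ (Ici 0))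
    (hw : ContinuousOn w (Icc 0 R)) (hR : 0 ≤ R) (h : ∀ τ ∈ Ioo 0 R, 0 ≤ w τ) :
    0 ≤ radialPotential ρ w R :=
  intervalIntegral.integral_nonneg hR fun _ hσ => by
    simpa only [weightedVolumeRatio_const, zero_mul] using
      weightedVolumeRatio_mono hρ_pos hρ_cont continuousOn_const
        (hw.mono (Icc_subset_Icc_right hσ.2)) hσ.1 fun τ hτ => h τ ⟨hτ.1, hτ.2.trans_le hσ.2⟩

theorem const_mul_integral_volumeRatio_le_radialPotential (hρ_pos : ∀ r > 0, 0 < ρ r)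
    (hρ_cont : ContinuousOn ρ (Ici 0)) (hΘ : IntegrableOn (volumeRatio ρ) (Ioc 0 R))
    (hw : ContinuousOn w (Icc 0 R)) (hR : 0 ≤ R) {c : ℝ} (h : ∀ τ ∈ Ioo 0 R, c ≤ w τ) :
    c * ∫ σ in (0:ℝ)..R, volumeRatio ρ σ ≤ radialPotential ρ w R :=
  radialPotential_const ρ c R ▸
    radialPotential_mono hρ_pos hρ_cont hΘ continuousOn_const hw hR h

theorem radialPotential_le_const_mul_integral_volumeRatio (hρ_pos : ∀ r > 0, 0 < ρ r)
    (hρ_cont : ContinuousOn ρ (Ici 0)) (hΘ : IntegrableOn (volumeRatio ρ) (Ioc 0 R))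
    (hw : ContinuousOn w (Icc 0 R)) (hR : 0 ≤ R) {C : ℝ} (h : ∀ τ ∈ Ioo 0 R, w τ ≤ C) :
    radialPotential ρ w R ≤ C * ∫ σ in (0:ℝ)..R, volumeRatio ρ σ :=
  radialPotential_const ρ C R ▸
    radialPotential_mono hρ_pos hρ_cont hΘ hw continuousOn_const hR h

theorem integral_volumeRatio_pos (hρ_pos : ∀ r > 0, 0 < ρ r)
    (hρ_cont : ContinuousOn ρ (Ici 0)) (hΘ : IntegrableOn (volumeRatio ρ) (Ioc 0 R))
    (hR : 0 < R) : 0 < ∫ σ in (0:ℝ)..R, volumeRatio ρ σ :=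
  intervalIntegral.intervalIntegral_pos_of_pos_on
    ((intervalIntegrable_iff_integrableOn_Ioc_of_le hR.le).2 hΘ)
    (fun _ hσ => volumeRatio_pos hρ_pos hρ_cont hσ.1) hR

theorem integral_volumeRatio_le_integral_Ioi (hρ_pos : ∀ r > 0, 0 < ρ r)
    (hρ_cont : ContinuousOn ρ (Ici 0)) (hΘ : IntegrableOn (volumeRatio ρ) (Ioi 0))
    (hR : 0 ≤ R) : ∫ σ in (0:ℝ)..R, volumeRatio ρ σ ≤ ∫ σ in Ioi 0, volumeRatio ρ σ := by
  rw [intervalIntegral.integral_of_le hR]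
  exact setIntegral_mono_set hΘ
    ((ae_restrict_iff' measurableSet_Ioi).2 (ae_of_all _ fun σ hσ =>
      (volumeRatio_pos hρ_pos hρ_cont hσ).le))
    Ioc_subset_Ioi_self.eventuallyLE

end RadialPotential

/-- The radial Lane–Emden system `-Δu = v ^ q`, `-Δv = u ^ p`, `(u, v)(0) = (a, b)` in integral
form, on a model whose spheres have area density `ρ = ψ ^ (n - 1)`; `volumeRatio ρ` is the
paper's `Θ`. The equations are only imposed while `u` and `v` stay positive. -/
structure IsRadialSolution (ρ : ℝ → ℝ) (p q a b : ℝ) (u v : ℝ → ℝ) : Prop where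
  eq_u : ∀ r ≥ (0:ℝ), (∀ τ ∈ Ico (0:ℝ) r, 0 < u τ ∧ 0 < v τ) →
    u r = a - radialPotential ρ (fun τ => v τ ^ q) r
  eq_v : ∀ r ≥ (0:ℝ), (∀ τ ∈ Ico (0:ℝ) r, 0 < u τ ∧ 0 < v τ) →
    v r = b - radialPotential ρ (fun τ => u τ ^ p) r

namespace IsRadialSolution

variable {ρ u v : ℝ → ℝ} {p q a b s t r : ℝ}

theorem apply_zero (hsol : IsRadialSolution ρ p q a b u v) : u 0 = a ∧ v 0 = b := by
  have hpos : ∀ τ ∈ Ico (0:ℝ) 0, 0 < u τ ∧ 0 < v τ := by simp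
  rw [hsol.eq_u 0 le_rfl hpos, hsol.eq_v 0 le_rfl hpos]
  simp [radialPotential]

theorem le_initial (hsol : IsRadialSolution ρ p q a b u v) (hρ_pos : ∀ r > 0, 0 < ρ r)
    (hρ_cont : ContinuousOn ρ (Ici 0)) (hu : Continuous u) (hv : Continuous v) (hr : 0 ≤ r)
    (hpos : ∀ τ ∈ Icc 0 r, 0 < u τ ∧ 0 < v τ) : u r ≤ a ∧ v r ≤ b := by
  have hpos' : ∀ τ ∈ Ico 0 r, 0 < u τ ∧ 0 < v τ := fun τ hτ => hpos τ (Ico_subset_Icc_self hτ)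
  constructor
  · rw [hsol.eq_u r hr hpos', sub_le_self_iff]
    exact radialPotential_nonneg hρ_pos hρ_cont
      (hv.continuousOn.rpow_const fun τ hτ => Or.inl (hpos τ hτ).2.ne') hr
      fun τ hτ => Real.rpow_nonneg (hpos τ (Ioo_subset_Icc_self hτ)).2.le q
  · rw [hsol.eq_v r hr hpos', sub_le_self_iff]
    exact radialPotential_nonneg hρ_pos hρ_cont
      (hu.continuousOn.rpow_const fun τ hτ => Or.inl (hpos τ hτ).1.ne') hr
      fun τ hτ => Real.rpow_nonneg (hpos τ (Ioo_subset_Icc_self hτ)).1.le p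

theorem u_lt_and_v_mem_Ioo (hsol : IsRadialSolution ρ p q s (2 * t) u v)
    (hρ_pos : ∀ r > 0, 0 < ρ r) (hρ_cont : ContinuousOn ρ (Ici 0))
    (hΘ : IntegrableOn (volumeRatio ρ) (Ioi 0)) (hp : 0 < p) (hq : 0 < q) (ht : 0 < t)
    (hts : (∫ σ in Ioi 0, volumeRatio ρ σ) * s ^ p < t) (hu : Continuous u) (hv : Continuous v)
    (hr : 0 < r) (hbox : ∀ τ ∈ Icc 0 r, 0 < u τ ∧ t ≤ v τ) :
    u r < s ∧ v r ∈ Ioo t (2 * t) := by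
  have hpos : ∀ τ ∈ Icc 0 r, 0 < u τ ∧ 0 < v τ := fun τ hτ =>
    ⟨(hbox τ hτ).1, ht.trans_le (hbox τ hτ).2⟩
  have hle : ∀ τ ∈ Icc 0 r, u τ ≤ s ∧ v τ ≤ 2 * t := fun τ hτ =>
    hsol.le_initial hρ_pos hρ_cont hu hv hτ.1 fun x hx => hpos x ⟨hx.1, hx.2.trans hτ.2⟩
  obtain ⟨m, hm, hmin⟩ : ∃ m > 0, ∀ τ ∈ Icc 0 r, m ≤ u τ := by
    obtain ⟨x, hx, hxmin⟩ :=
      isCompact_Icc.exists_isMinOn (nonempty_Icc.2 hr.le) hu.continuousOn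
    exact ⟨u x, (hpos x hx).1, hxmin⟩
  have hΘr : IntegrableOn (volumeRatio ρ) (Ioc 0 r) := hΘ.mono_set Ioc_subset_Ioi_self
  have hJ_pos := integral_volumeRatio_pos hρ_pos hρ_cont hΘr hr
  have hJ_le := integral_volumeRatio_le_integral_Ioi hρ_pos hρ_cont hΘ hr.le
  have hcu : ContinuousOn (fun τ => u τ ^ p) (Icc 0 r) :=
    hu.continuousOn.rpow_const fun τ hτ => Or.inl (hpos τ hτ).1.ne'
  have hcv : ContinuousOn (fun τ => v τ ^ q) (Icc 0 r) :=
    hv.continuousOn.rpow_const fun τ hτ => Or.inl (hpos τ hτ).2.ne'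
  have hv_lower := const_mul_integral_volumeRatio_le_radialPotential hρ_pos hρ_cont hΘr hcv
    hr.le fun τ hτ => Real.rpow_le_rpow ht.le (hbox τ (Ioo_subset_Icc_self hτ)).2 hq.le
  have hu_upper := radialPotential_le_const_mul_integral_volumeRatio hρ_pos hρ_cont hΘr hcu
    hr.le fun τ hτ =>
      Real.rpow_le_rpow (hpos τ (Ioo_subset_Icc_self hτ)).1.le (hle τ (Ioo_subset_Icc_self hτ)).1
        hp.le
  have hu_lower := const_mul_integral_volumeRatio_le_radialPotential hρ_pos hρ_cont hΘr hcu
    hr.le fun τ hτ => Real.rpow_le_rpow hm.le (hmin τ (Ioo_subset_Icc_self hτ)) hp.le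
  have hpos' : ∀ τ ∈ Ico 0 r, 0 < u τ ∧ 0 < v τ := fun τ hτ => hpos τ (Ico_subset_Icc_self hτ)
  rw [hsol.eq_u r hr.le hpos', hsol.eq_v r hr.le hpos']
  have hs : 0 < s := hsol.apply_zero.1 ▸ (hpos 0 ⟨le_rfl, hr.le⟩).1
  have hsJ_le := mul_le_mul_of_nonneg_left hJ_le (Real.rpow_nonneg hs.le p)
  refine ⟨?_, ?_, ?_⟩ <;>
    linarith [mul_pos (Real.rpow_pos_of_pos ht q) hJ_pos, mul_pos (Real.rpow_pos_of_pos hm p) hJ_pos]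

theorem exists_u_nonpos_or_v_le (hsol : IsRadialSolution ρ p q a b u v)
    (hρ_pos : ∀ r > 0, 0 < ρ r) (hρ_cont : ContinuousOn ρ (Ici 0))
    (hΘ : IntegrableOn (volumeRatio ρ) (Ioi 0)) (hq : 0 < q) (ht : 0 < t)
    (hat : a < (∫ σ in Ioi 0, volumeRatio ρ σ) * t ^ q) (hv : Continuous v) :
    ∃ r ≥ 0, u r ≤ 0 ∨ v r ≤ t := by
  by_contra! hstay
  have hlim := (intervalIntegral_tendsto_integral_Ioi 0 hΘ tendsto_id).mul_const (t ^ q)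
  obtain ⟨r, har, hr⟩ : ∃ r, a < (∫ σ in (0:ℝ)..r, volumeRatio ρ σ) * t ^ q ∧ 0 < r :=
    ((hlim.eventually (eventually_gt_nhds hat)).and (eventually_gt_atTop 0)).exists
  have hpos : ∀ τ ∈ Ico 0 r, 0 < u τ ∧ 0 < v τ := fun τ hτ =>
    ⟨(hstay τ hτ.1).1, ht.trans (hstay τ hτ.1).2⟩
  have hv_lower := const_mul_integral_volumeRatio_le_radialPotential hρ_pos hρ_cont
    (hΘ.mono_set Ioc_subset_Ioi_self)
    (hv.continuousOn.rpow_const fun τ _ => Or.inr hq.le) hr.le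
    fun τ hτ => Real.rpow_le_rpow ht.le (hstay τ hτ.1.le).2.le hq.le
  have hu_r := (hstay r hr.le).1
  rw [hsol.eq_u r hr.le hpos] at hu_r
  linarith

theorem exists_first_zero_of_u (hsol : IsRadialSolution ρ p q s (2 * t) u v)
    (hρ_pos : ∀ r > 0, 0 < ρ r) (hρ_cont : ContinuousOn ρ (Ici 0))
    (hΘ : IntegrableOn (volumeRatio ρ) (Ioi 0)) (hp : 0 < p) (hq : 0 < q) (hs : 0 < s)
    (ht : 0 < t) (hts : (∫ σ in Ioi 0, volumeRatio ρ σ) * s ^ p < t)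
    (hst : s < (∫ σ in Ioi 0, volumeRatio ρ σ) * t ^ q) (hu : Continuous u) (hv : Continuous v) :
    ∃ R > 0, u R = 0 ∧ t ≤ v R ∧
      ∀ τ ∈ Ioo 0 R, 0 < u τ ∧ u τ < s ∧ t < v τ ∧ v τ < 2 * t := by
  obtain ⟨hu0, hv0⟩ := hsol.apply_zero
  set E := Ici 0 ∩ {r | u r ≤ 0 ∨ v r ≤ t}
  have hE_closed : IsClosed E :=
    isClosed_Ici.inter ((isClosed_le hu continuous_const).union (isClosed_le hv continuous_const))
  have hE_bdd : BddBelow E := ⟨0, fun r hr => hr.1⟩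
  obtain ⟨r₀, hr₀, hr₀E⟩ := hsol.exists_u_nonpos_or_v_le hρ_pos hρ_cont hΘ hq ht hst hv
  set R := sInf E
  have hRE : R ∈ E := hE_closed.csInf_mem ⟨r₀, hr₀, hr₀E⟩ hE_bdd
  have hR : 0 < R := by
    refine hRE.1.lt_of_ne fun h => ?_
    have h0 : u 0 ≤ 0 ∨ v 0 ≤ t := h ▸ hRE.2
    rw [hu0, hv0] at h0
    rcases h0 with h0 | h0 <;> linarith
  have hbefore : ∀ τ ∈ Ico 0 R, 0 < u τ ∧ t < v τ := fun τ hτ => by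
    simpa [E, hτ.1, not_or] using notMem_of_lt_csInf hτ.2 hE_bdd
  have hv_ge : ∀ τ ∈ Icc 0 R, t ≤ v τ := fun τ hτ => by
    rcases hτ.2.lt_or_eq with hτR | rfl
    · exact (hbefore τ ⟨hτ.1, hτR⟩).2.le
    · exact hv.continuousAt.ge_of_forall_Ioo hR fun x hx =>
        (hbefore x (Ioo_subset_Ico_self hx)).2.le
  have hinside : ∀ r ∈ Ioc 0 R, 0 < u r → u r < s ∧ v r ∈ Ioo t (2 * t) := by
    refine fun r hr hur => hsol.u_lt_and_v_mem_Ioo hρ_pos hρ_cont hΘ hp hq ht hts hu hv hr.1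
      fun τ hτ => ⟨?_, hv_ge τ ⟨hτ.1, hτ.2.trans hr.2⟩⟩
    rcases hτ.2.lt_or_eq with hτr | rfl
    · exact (hbefore τ ⟨hτ.1, hτr.trans_le hr.2⟩).1
    · exact hur
  have huR : u R = 0 := by
    refine le_antisymm ?_ (hu.continuousAt.ge_of_forall_Ioo hR fun x hx =>
      (hbefore x (Ioo_subset_Ico_self hx)).1.le)
    by_contra! huR
    have hvR := (hinside R ⟨hR, le_rfl⟩ huR).2.1
    rcases hRE.2 with h | h <;> linarith
  refine ⟨R, hR, huR, hv_ge R ⟨hR.le, le_rfl⟩, fun τ hτ => ?_⟩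
  have huτ := (hbefore τ (Ioo_subset_Ico_self hτ)).1
  obtain ⟨hus, hvt, hv2t⟩ := hinside τ (Ioo_subset_Ioc_self hτ) huτ
  exact ⟨huτ, hus, hvt, hv2t⟩

end IsRadialSolution

theorem initial_datum_in_A_general
    (n : ℕ) (ψ : ℝ → ℝ)
    (hψpos : ∀ r > (0:ℝ), 0 < ψ r)
    (hψcont : ContinuousOn ψ (Ici 0))
    (hΘint : IntegrableOn
      (fun r => (∫ s in (0:ℝ)..r, ψ s ^ (n-1)) / ψ r ^ (n-1)) (Ioi (0:ℝ)))
    (p q : ℝ) (hp : 0 < p) (hq : 0 < q)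
    (s t : ℝ) (hs : 0 < s) (ht : 0 < t)
    (hts : t > (∫ r in Ioi (0:ℝ), (∫ σ in (0:ℝ)..r, ψ σ ^ (n-1)) / ψ r ^ (n-1)) * s ^ p)
    (hst : s < (∫ r in Ioi (0:ℝ), (∫ σ in (0:ℝ)..r, ψ σ ^ (n-1)) / ψ r ^ (n-1)) * t ^ q)
    (u v : ℝ → ℝ)
    (hucont : Continuous u) (hvcont : Continuous v)
    -- the integral equations hold on the maximal positivity interval
    (hequ : ∀ r ≥ (0:ℝ), (∀ τ ∈ Ico (0:ℝ) r, 0 < u τ ∧ 0 < v τ) →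
      u r = s - ∫ σ in (0:ℝ)..r, (∫ τ in (0:ℝ)..σ, v τ ^ q * ψ τ ^ (n-1)) / ψ σ ^ (n-1))
    (heqv : ∀ r ≥ (0:ℝ), (∀ τ ∈ Ico (0:ℝ) r, 0 < u τ ∧ 0 < v τ) →
      v r = 2 * t - ∫ σ in (0:ℝ)..r, (∫ τ in (0:ℝ)..σ, u τ ^ p * ψ τ ^ (n-1)) / ψ σ ^ (n-1)) :
    ∃ R > (0:ℝ), u R = 0 ∧ t ≤ v R ∧
      ∀ τ ∈ Ioo (0:ℝ) R, 0 < u τ ∧ u τ < s ∧ t < v τ ∧ v τ < 2 * t := by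
  have hsol : IsRadialSolution (fun r => ψ r ^ (n-1)) p q s (2 * t) u v := ⟨hequ, heqv⟩
  exact hsol.exists_first_zero_of_u (fun r hr => pow_pos (hψpos r hr) _) (hψcont.pow _) hΘint
    hp hq hs ht hts hst hucont hvcont

/-- Membership of `(s, 2t)` in the set `A`: on a stochastically incomplete model, if
`t > θ s^p` and `s < θ t^q`, then the solution starting from `(s, 2t)` exits the box
`(0,s) × (t,2t)` in finite time through `u = 0` (with `v ≥ t` there). -/
theorem initial_datum_in_A
    (n : ℕ) (hn : 3 ≤ n) (ψ : ℝ → ℝ)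
    (hψ0 : ψ 0 = 0) (hψ'0 : HasDerivAt ψ 1 0)
    (hψpos : ∀ r > (0:ℝ), 0 < ψ r)
    (hψcont : ContinuousOn ψ (Ici 0))
    (hΘint : IntegrableOn
      (fun r => (∫ s in (0:ℝ)..r, ψ s ^ (n-1)) / ψ r ^ (n-1)) (Ioi (0:ℝ)))
    (p q : ℝ) (hp : 0 < p) (hq : 0 < q)
    (s t : ℝ) (hs : 0 < s) (ht : 0 < t)
    (hts : t > (∫ r in Ioi (0:ℝ), (∫ σ in (0:ℝ)..r, ψ σ ^ (n-1)) / ψ r ^ (n-1)) * s ^ p)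
    (hst : s < (∫ r in Ioi (0:ℝ), (∫ σ in (0:ℝ)..r, ψ σ ^ (n-1)) / ψ r ^ (n-1)) * t ^ q)
    (u v : ℝ → ℝ)
    (hucont : Continuous u) (hvcont : Continuous v)
    (hu0 : u 0 = s) (hv0 : v 0 = 2 * t)
    -- the integral equations hold on the maximal positivity interval
    (hequ : ∀ r ≥ (0:ℝ), (∀ τ ∈ Ico (0:ℝ) r, 0 < u τ ∧ 0 < v τ) →
      u r = s - ∫ σ in (0:ℝ)..r, (∫ τ in (0:ℝ)..σ, v τ ^ q * ψ τ ^ (n-1)) / ψ σ ^ (n-1))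
    (heqv : ∀ r ≥ (0:ℝ), (∀ τ ∈ Ico (0:ℝ) r, 0 < u τ ∧ 0 < v τ) →
      v r = 2 * t - ∫ σ in (0:ℝ)..r, (∫ τ in (0:ℝ)..σ, u τ ^ p * ψ τ ^ (n-1)) / ψ σ ^ (n-1)) :
    ∃ R > (0:ℝ), u R = 0 ∧ t ≤ v R ∧
      ∀ τ ∈ Ioo (0:ℝ) R, 0 < u τ ∧ u τ < s ∧ t < v τ ∧ v τ < 2 * t :=
  initial_datum_in_A_general n ψ hψpos hψcont hΘint p q hp hq s t hs ht hts hst u v hucont hvcont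
    hequ heqv
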